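/- arXiv:1806.06028 — 2 statements merged into one kernel-verified Lean document; each statement's English description precedes it below -/
import Mathlib

section
/- Define h(x) = log(x) - ψ(x) for x > 0, where ψ is the digamma function. Then for all x > 0, 1/(2x) < h(x) < 1/(2x) + 1/x². -/
open MeasureTheory Real Filter Set Topology

noncomputable def gammaPdf (k l x : ℝ) : ℝ :=
  l ^ (-k) * x ^ (k - 1) * Real.exp (-x / l) / Real.Gamma k

noncomputable def digamma (x : ℝ) : ℝ := deriv Real.Gamma x / Real.Gamma x

/-!
Put `h x = log x - ψ x` and `g x = 1 / x - log (1 + 1 / x)`. The recurrence `ψ (x + 1) = ψ x + 1 / x`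
gives `h x - h (x + 1) = g x`, and convexity of `log ∘ Γ` squeezes `ψ` between `log (x - 1)` and
`log x`, so `h x → 0` as `x → ∞`. The bounds `2t / (t + 2) < log (1 + t) < t - t² / (2(1 + t))`
for `t > 0` put `g` strictly between `φ x - φ (x + 1)` for `φ x = 1 / (2x)` and for
`φ x = 1 / (2x) + 1 / x²`; since `h - φ → 0` in both cases, telescoping compares `h` with `φ`.
-/

lemma lt_of_forall_sub_add_one_lt {f g : ℝ → ℝ} {x : ℝ}
    (hstep : ∀ y, x ≤ y → f y - f (y + 1) < g y - g (y + 1))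
    (hlim : Tendsto (fun y => f y - g y) atTop (𝓝 0)) : f x < g x := by
  set d : ℕ → ℝ := fun n => f (x + n) - g (x + n) with hd
  have hmono : StrictMono d := strictMono_nat_of_lt_succ fun n => by
    have := hstep (x + n) (le_add_of_nonneg_right n.cast_nonneg)
    simp only [hd, Nat.cast_add_one, ← add_assoc]
    linarith
  have hdlim : Tendsto d atTop (𝓝 0) :=
    hlim.comp (tendsto_atTop_add_const_left _ x tendsto_natCast_atTop_atTop)
  have hd01 := hmono zero_lt_one
  have hd1 := hmono.monotone.ge_of_tendsto hdlim 1
  simp only [hd, Nat.cast_zero, add_zero] at hd01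
  linarith

lemma log_one_add_lt_sub {t : ℝ} (ht : 0 < t) :
    log (1 + t) < t - t ^ 2 / (2 * (1 + t)) := by
  have h := (self_lt_sinh_iff (x := log (1 + t))).2 (log_pos (by linarith))
  rw [sinh_log (by linarith)] at h
  convert h using 1
  field_simp
  ring

lemma log_Gamma_add_one {x : ℝ} (hx : 0 < x) :
    log (Gamma (x + 1)) = log (Gamma x) + log x := by
  rw [Gamma_add_one hx.ne', log_mul hx.ne' (Gamma_pos_of_pos hx).ne', add_comm]

lemma hasDerivAt_log_Gamma {x : ℝ} (hx : 0 < x) : HasDerivAt (log ∘ Gamma) (digamma x) x := by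
  have hGamma : DifferentiableAt ℝ Gamma x :=
    differentiableAt_Gamma fun m hm => by linarith [hm ▸ hx, m.cast_nonneg (α := ℝ)]
  exact hGamma.hasDerivAt.log (Gamma_pos_of_pos hx).ne'

lemma digamma_add_one {x : ℝ} (hx : 0 < x) : digamma (x + 1) = digamma x + x⁻¹ := by
  have hleft : HasDerivAt (fun y => log (Gamma (y + 1))) (digamma (x + 1)) x :=
    (hasDerivAt_log_Gamma (by linarith)).comp_add_const x 1
  have hright : HasDerivAt (fun y => log (Gamma y) + log y) (digamma x + x⁻¹) x :=
    (hasDerivAt_log_Gamma hx).add (hasDerivAt_log hx.ne')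
  refine hleft.unique (hright.congr_of_eventuallyEq ?_)
  filter_upwards [eventually_gt_nhds hx] with y hy using log_Gamma_add_one hy

lemma slope_log_Gamma_add_one {x : ℝ} (hx : 0 < x) : slope (log ∘ Gamma) x (x + 1) = log x := by
  rw [slope_def_field, add_sub_cancel_left, div_one, Function.comp_apply, Function.comp_apply,
    log_Gamma_add_one hx, add_sub_cancel_left]

lemma digamma_le_log {x : ℝ} (hx : 0 < x) : digamma x ≤ log x := by
  have hx1 : 0 < x + 1 := by linarith
  simpa only [slope_log_Gamma_add_one hx] using
    convexOn_log_Gamma.le_slope_of_hasDerivAt hx hx1 (lt_add_one x) (hasDerivAt_log_Gamma hx)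

lemma log_le_digamma_add_one {x : ℝ} (hx : 0 < x) : log x ≤ digamma (x + 1) := by
  have hx1 : 0 < x + 1 := by linarith
  simpa only [slope_log_Gamma_add_one hx] using
    convexOn_log_Gamma.slope_le_of_hasDerivAt hx hx1 (lt_add_one x) (hasDerivAt_log_Gamma hx1)

lemma log_sub_digamma_sub_add_one {x : ℝ} (hx : 0 < x) :
    (log x - digamma x) - (log (x + 1) - digamma (x + 1)) = x⁻¹ - log (1 + x⁻¹) := by
  have : 1 + x⁻¹ = (x + 1) / x := by field_simp
  rw [digamma_add_one hx, this, log_div (by linarith) hx.ne']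
  ring

lemma tendsto_log_sub_digamma_atTop : Tendsto (fun x => log x - digamma x) atTop (𝓝 0) := by
  have hbound : Tendsto (fun x : ℝ => (x - 1)⁻¹) atTop (𝓝 0) :=
    tendsto_inv_atTop_zero.comp (tendsto_atTop_add_const_right _ (-1) tendsto_id)
  refine tendsto_of_tendsto_of_tendsto_of_le_of_le' tendsto_const_nhds hbound ?_ ?_
  · filter_upwards [eventually_gt_atTop 0] with x hx
    linarith [digamma_le_log hx]
  · filter_upwards [eventually_gt_atTop 1] with x hx
    have hx' : 0 < x - 1 := by linarith
    have hlog : log x - log (x - 1) ≤ (x - 1)⁻¹ := by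
      rw [← log_div (by linarith) hx'.ne']
      have := log_le_sub_one_of_pos (div_pos (by linarith) hx')
      rwa [div_sub_one hx'.ne', sub_sub_cancel, one_div] at this
    have := log_le_digamma_add_one hx'
    rw [sub_add_cancel] at this
    linarith

lemma lt_log_sub_digamma_sub_add_one {x : ℝ} (hx : 0 < x) :
    1 / (2 * x) - 1 / (2 * (x + 1)) < (log x - digamma x) - (log (x + 1) - digamma (x + 1)) := by
  have hlog := log_one_add_lt_sub (inv_pos.2 hx)
  rw [log_sub_digamma_sub_add_one hx]
  convert sub_lt_sub_left hlog x⁻¹ using 1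
  field_simp
  ring

lemma log_sub_digamma_sub_add_one_lt {x : ℝ} (hx : 0 < x) :
    (log x - digamma x) - (log (x + 1) - digamma (x + 1)) <
      (1 / (2 * x) + 1 / x ^ 2) - (1 / (2 * (x + 1)) + 1 / (x + 1) ^ 2) := by
  have hlog := lt_log_one_add_of_pos (inv_pos.2 hx)
  have hslack : 0 < (7 * x ^ 2 + 7 * x + 2) / (2 * x ^ 2 * (x + 1) ^ 2 * (2 * x + 1)) := by
    positivity
  have htelescope : x⁻¹ - 2 * x⁻¹ / (x⁻¹ + 2) +
      (7 * x ^ 2 + 7 * x + 2) / (2 * x ^ 2 * (x + 1) ^ 2 * (2 * x + 1)) =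
      (1 / (2 * x) + 1 / x ^ 2) - (1 / (2 * (x + 1)) + 1 / (x + 1) ^ 2) := by
    field_simp
    ring
  rw [log_sub_digamma_sub_add_one hx, ← htelescope]
  linarith

theorem log_sub_digamma_bounds (x : ℝ) (hx : 0 < x) :
    1 / (2 * x) < Real.log x - digamma x ∧
    Real.log x - digamma x < 1 / (2 * x) + 1 / x ^ 2 := by
  have hinv : Tendsto (fun y : ℝ => y⁻¹) atTop (𝓝 0) := tendsto_inv_atTop_zero
  constructor
  · refine lt_of_forall_sub_add_one_lt (f := fun y => 1 / (2 * y))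
      (g := fun y => log y - digamma y)
      (fun y hy => lt_log_sub_digamma_sub_add_one (hx.trans_le hy)) ?_
    simpa [div_eq_mul_inv] using (hinv.div_const 2).sub tendsto_log_sub_digamma_atTop
  · refine lt_of_forall_sub_add_one_lt (f := fun y => log y - digamma y)
      (g := fun y => 1 / (2 * y) + 1 / y ^ 2)
      (fun y hy => log_sub_digamma_sub_add_one_lt (hx.trans_le hy)) ?_
    simpa [div_eq_mul_inv] using
      tendsto_log_sub_digamma_atTop.sub ((hinv.div_const 2).add (hinv.pow 2))
end

section
/- Let p = p(·, k, λ) be the Gamma(k, λ) density and let f : (0,∞) → ℝ be differentiable with lim_{x→0⁺} f(x)p(x) = 0, lim_{x→∞} f(x)p(x) = 0, and such that x ↦ f'(x)p(x) + f(x)p'(x) is integrable on (0,∞). If X ~ Gamma(k, λ), then E[f'(X) + ((k-1)/X - 1/λ) f(X)] = 0. -/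
/-!
Since `p' = ((k - 1) / x - 1 / l) p` on `(0, ∞)`, the integrand `(f' + ((k - 1) / x - 1 / l) f) p`
is the derivative of `f p`, so its integral over `(0, ∞)` is the difference of the boundary
limits of `f p`, both of which vanish.
-/

open MeasureTheory Real Filter Set Topology

theorem gammaPdf_nonneg {k l x : ℝ} (hk : 0 < k) (hl : 0 ≤ l) (hx : 0 ≤ x) :
    0 ≤ gammaPdf k l x := by
  have := Real.Gamma_pos_of_pos hk
  unfold gammaPdf
  positivity

theorem measurable_gammaPdf (k l : ℝ) : Measurable (gammaPdf k l) := by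
  unfold gammaPdf; fun_prop

theorem hasDerivAt_gammaPdf (k l : ℝ) {x : ℝ} (hx : x ≠ 0) :
    HasDerivAt (gammaPdf k l) (((k - 1) / x - 1 / l) * gammaPdf k l x) x := by
  have hpow := Real.hasDerivAt_rpow_const (p := k - 1) (Or.inl hx)
  have hexp := ((hasDerivAt_neg x).div_const l).exp
  refine (((hpow.mul hexp).const_mul (l ^ (-k))).div_const (Gamma k)).congr_deriv ?_
    |>.congr_of_eventuallyEq (.of_forall fun y => ?_)
  · simp only [gammaPdf, Real.rpow_sub_one hx]
    field_simp
    ring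
  · simp only [gammaPdf, Pi.mul_apply]
    ring

theorem withDensity_ofReal_indicator {α : Type*} [MeasurableSpace α] (μ : Measure α)
    {s : Set α} (hs : MeasurableSet s) (ρ : α → ℝ) :
    μ.withDensity (fun x => ENNReal.ofReal (s.indicator ρ x)) =
      (μ.restrict s).withDensity (fun x => ENNReal.ofReal (ρ x)) := by
  rw [← withDensity_indicator hs]
  exact congrArg μ.withDensity (s.indicator_comp_of_zero ENNReal.ofReal_zero).symm

theorem integral_withDensity_ofReal {α : Type*} [MeasurableSpace α] {μ : Measure α}
    {ρ : α → ℝ} (hρ : Measurable ρ) (hρ0 : 0 ≤ᵐ[μ] ρ) (g : α → ℝ) :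
    ∫ x, g x ∂μ.withDensity (fun x => ENNReal.ofReal (ρ x)) = ∫ x, ρ x * g x ∂μ := by
  rw [integral_withDensity_eq_integral_toReal_smul hρ.ennreal_ofReal
    (ae_of_all _ fun _ => ENNReal.ofReal_lt_top)]
  refine integral_congr_ae (hρ0.mono fun x hx => ?_)
  simp [ENNReal.toReal_ofReal hx]

theorem aemeasurable_restrict_of_hasDerivAt {f f' : ℝ → ℝ} {s : Set ℝ} {μ : Measure ℝ}
    (hs : MeasurableSet s) (hderiv : ∀ x ∈ s, HasDerivAt f (f' x) x) :
    AEMeasurable f' (μ.restrict s) :=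
  (measurable_deriv f).aemeasurable.congr <|
    (ae_restrict_mem hs).mono fun x hx => (hderiv x hx).deriv

theorem gamma_stein_identity_general {Ω : Type*} [MeasurableSpace Ω] (P : Measure Ω)
    (X : Ω → ℝ) (hX : Measurable X)
    (k l : ℝ) (hk : 0 < k) (hl : 0 < l)
    (hlaw : Measure.map X P =
      MeasureTheory.volume.withDensity (fun x => ENNReal.ofReal (if 0 < x then gammaPdf k l x else 0)))
    (f f' : ℝ → ℝ)
    (hderiv : ∀ x > (0 : ℝ), HasDerivAt f (f' x) x)
    (h0 : Filter.Tendsto (fun x => f x * gammaPdf k l x) (nhdsWithin 0 (Set.Ioi 0)) (nhds 0))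
    (hinf : Filter.Tendsto (fun x => f x * gammaPdf k l x) Filter.atTop (nhds 0))
    (hint : IntegrableOn
      (fun x => f' x * gammaPdf k l x + f x * (((k - 1) / x - 1 / l) * gammaPdf k l x))
      (Set.Ioi 0)) :
    (∫ ω, (f' (X ω) + ((k - 1) / X ω - 1 / l) * f (X ω)) ∂P) = 0 := by
  set g : ℝ → ℝ := fun x => f' x + ((k - 1) / x - 1 / l) * f x
  have hlaw' : Measure.map X P =
      (volume.restrict (Ioi 0)).withDensity (fun x => ENNReal.ofReal (gammaPdf k l x)) :=
    hlaw.trans (withDensity_ofReal_indicator _ measurableSet_Ioi _)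
  have hg : AEMeasurable g (volume.restrict (Ioi 0)) := by
    have hf : AEMeasurable f (volume.restrict (Ioi 0)) := ContinuousOn.aemeasurable
      (fun x hx => (hderiv x hx).continuousAt.continuousWithinAt) measurableSet_Ioi
    have hf' : AEMeasurable f' (volume.restrict (Ioi 0)) :=
      aemeasurable_restrict_of_hasDerivAt measurableSet_Ioi hderiv
    fun_prop
  calc ∫ ω, g (X ω) ∂P = ∫ x, g x ∂(Measure.map X P) :=
        (integral_map hX.aemeasurable <| hlaw' ▸
          (hg.mono_ac (withDensity_absolutelyContinuous _ _)).aestronglyMeasurable).symm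
    _ = ∫ x in Ioi 0, gammaPdf k l x * g x := by
        rw [hlaw', integral_withDensity_ofReal (measurable_gammaPdf k l)
          ((ae_restrict_mem measurableSet_Ioi).mono fun x hx =>
            gammaPdf_nonneg hk hl.le (le_of_lt hx))]
    _ = ∫ x in Ioi 0,
          (f' x * gammaPdf k l x + f x * (((k - 1) / x - 1 / l) * gammaPdf k l x)) :=
        setIntegral_congr_fun measurableSet_Ioi fun x _ => by ring
    _ = 0 - 0 := integral_Ioi_deriv_mul_eq_sub hderiv
        (fun x hx => hasDerivAt_gammaPdf k l (ne_of_gt hx)) hint h0 hinf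
    _ = 0 := sub_self 0

theorem gamma_stein_identity {Ω : Type*} [MeasurableSpace Ω] (P : Measure Ω)
    [IsProbabilityMeasure P] (X : Ω → ℝ) (hX : Measurable X)
    (k l : ℝ) (hk : 0 < k) (hl : 0 < l)
    (hlaw : Measure.map X P =
      MeasureTheory.volume.withDensity (fun x => ENNReal.ofReal (if 0 < x then gammaPdf k l x else 0)))
    (f f' : ℝ → ℝ)
    (hderiv : ∀ x > (0 : ℝ), HasDerivAt f (f' x) x)
    (h0 : Filter.Tendsto (fun x => f x * gammaPdf k l x) (nhdsWithin 0 (Set.Ioi 0)) (nhds 0))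
    (hinf : Filter.Tendsto (fun x => f x * gammaPdf k l x) Filter.atTop (nhds 0))
    (hint : IntegrableOn
      (fun x => f' x * gammaPdf k l x + f x * (((k - 1) / x - 1 / l) * gammaPdf k l x))
      (Set.Ioi 0)) :
    (∫ ω, (f' (X ω) + ((k - 1) / X ω - 1 / l) * f (X ω)) ∂P) = 0 :=
  gamma_stein_identity_general P X hX k l hk hl hlaw f f' hderiv h0 hinf hint
end
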